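/- For each k ∈ {1,…,16}, Π_k.mulVec GHZ'₃ = 0; i.e., the phase-flipped three-qubit GHZ state is annihilated by all sixteen projectors of the contextuality witness μ₃, so μ₃ evaluates to 0 on it. -/

import Mathlib

open Matrix BigOperators

noncomputable section

/-- Pauli X matrix. -/
def pauliX : Matrix (Fin 2) (Fin 2) ℂ := !![0, 1; 1, 0]

/-- Pauli Y matrix. -/
def pauliY : Matrix (Fin 2) (Fin 2) ℂ := !![0, -Complex.I; Complex.I, 0]

/-- n-fold tensor (Kronecker) product of a family of 2×2 matrices,
defined entrywise by `T(A) f g = ∏ j, (A j) (f j) (g j)`. -/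
def tensor {n : ℕ} (A : Fin n → Matrix (Fin 2) (Fin 2) ℂ) :
    Matrix (Fin n → Fin 2) (Fin n → Fin 2) ℂ :=
  Matrix.of fun f g => ∏ j, A j (f j) (g j)

/-- The n-partite MABK operator
`M_n = (1/(2i)) (⊗ⱼ (X + iY) − ⊗ⱼ (X − iY))`. -/
def MABK (n : ℕ) : Matrix (Fin n → Fin 2) (Fin n → Fin 2) ℂ :=
  (1 / (2 * Complex.I)) •
    (tensor (fun _ : Fin n => pauliX + Complex.I • pauliY)
      - tensor (fun _ : Fin n => pauliX - Complex.I • pauliY))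

/-- The n-qubit GHZ state `(|0…0⟩ + i|1…1⟩)/√2`. -/
def GHZ (n : ℕ) : (Fin n → Fin 2) → ℂ :=
  fun f =>
    if f = fun _ => 0 then 1 / (Real.sqrt 2 : ℂ)
    else if f = fun _ => 1 then Complex.I / (Real.sqrt 2 : ℂ)
    else 0

/-- The phase-flipped n-qubit GHZ state `(|0…0⟩ − i|1…1⟩)/√2`. -/
def GHZ' (n : ℕ) : (Fin n → Fin 2) → ℂ :=
  fun f =>
    if f = fun _ => 0 then 1 / (Real.sqrt 2 : ℂ)
    else if f = fun _ => 1 then -Complex.I / (Real.sqrt 2 : ℂ)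
    else 0

/-- Projector onto the +1 eigenstate of Pauli X. -/
def Ppx : Matrix (Fin 2) (Fin 2) ℂ := (1 / 2 : ℂ) • (1 + pauliX)

/-- Projector onto the −1 eigenstate of Pauli X. -/
def Pmx : Matrix (Fin 2) (Fin 2) ℂ := (1 / 2 : ℂ) • (1 - pauliX)

/-- Projector onto the +1 eigenstate of Pauli Y. -/
def Ppy : Matrix (Fin 2) (Fin 2) ℂ := (1 / 2 : ℂ) • (1 + pauliY)

/-- Projector onto the −1 eigenstate of Pauli Y. -/
def Pmy : Matrix (Fin 2) (Fin 2) ℂ := (1 / 2 : ℂ) • (1 - pauliY)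

/-- The sixteen rank-one projectors Π₁,…,Π₁₆ of the contextuality witness μ₃
(indexed by `Fin 16`, so `Proj3 k` is Π_{k+1}). -/
def Proj3 : Fin 16 → Matrix (Fin 3 → Fin 2) (Fin 3 → Fin 2) ℂ :=
  ![tensor ![Pmy, Ppy, Ppy], tensor ![Pmy, Pmy, Pmy],
    tensor ![Ppy, Ppy, Pmy], tensor ![Ppy, Pmy, Ppy],
    tensor ![Ppy, Ppx, Ppx], tensor ![Ppy, Pmx, Pmx],
    tensor ![Pmy, Ppx, Pmx], tensor ![Pmy, Pmx, Ppx],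
    tensor ![Pmx, Ppy, Pmx], tensor ![Pmx, Pmy, Ppx],
    tensor ![Ppx, Ppy, Ppx], tensor ![Ppx, Pmy, Pmx],
    tensor ![Ppx, Ppx, Ppy], tensor ![Ppx, Pmx, Pmy],
    tensor ![Pmx, Ppx, Pmy], tensor ![Pmx, Pmx, Ppy]]

/-!
Each of Π_{±x}, Π_{±y} sends |1⟩ to a fixed multiple c of its image of |0⟩, with c = ±1 for
Π_{±x} and c = ∓i for Π_{±y}. A product operator T therefore sends |1…1⟩ to (∏ⱼ cⱼ) T|0…0⟩, and
for each of the sixteen sign triples this phase is −i, so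
T(|0…0⟩ − i|1…1⟩) = (1 − i·(−i)) T|0…0⟩ = 0.
-/

open Complex

/-- In ket notation, `A|1⟩ = c • A|0⟩`. -/
def HasColumnRatio (A : Matrix (Fin 2) (Fin 2) ℂ) (c : ℂ) : Prop :=
  A.col 1 = c • A.col 0

lemma hasColumnRatio_Ppx : HasColumnRatio Ppx 1 := by
  ext x; fin_cases x <;> simp [Ppx, pauliX]

lemma hasColumnRatio_Pmx : HasColumnRatio Pmx (-1) := by
  ext x; fin_cases x <;> simp [Pmx, pauliX]

lemma hasColumnRatio_Ppy : HasColumnRatio Ppy (-I) := by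
  ext x; fin_cases x <;> simp [Ppy, pauliY] <;> grind [I_mul_I]

lemma hasColumnRatio_Pmy : HasColumnRatio Pmy I := by
  ext x; fin_cases x <;> simp [Pmy, pauliY] <;> grind [I_mul_I]

lemma tensor_col_const_one {n : ℕ} {A : Fin n → Matrix (Fin 2) (Fin 2) ℂ} {c : Fin n → ℂ}
    (h : ∀ j, HasColumnRatio (A j) (c j)) :
    (tensor A).col (fun _ => 1) = (∏ j, c j) • (tensor A).col (fun _ => 0) := by
  ext f
  simp only [col_apply, tensor, of_apply, Pi.smul_apply, smul_eq_mul, ← Finset.prod_mul_distrib]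
  exact Finset.prod_congr rfl fun j _ => congrFun (h j) (f j)

lemma GHZ'_eq_smul_sub_single {n : ℕ} [NeZero n] :
    GHZ' n = (1 / √2 : ℂ) • (Pi.single (fun _ => 0) 1 - I • Pi.single (fun _ => 1) 1) := by
  have hne : (fun _ : Fin n => (0 : Fin 2)) ≠ fun _ => 1 :=
    fun h => zero_ne_one (congrFun h 0)
  ext f
  by_cases h0 : f = fun _ => 0
  · subst h0; simp [GHZ', hne]
  by_cases h1 : f = fun _ => 1
  · subst h1; simp [GHZ', hne.symm]; ring
  · simp [GHZ', h0, h1]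

theorem tensor_mulVec_GHZ'_eq_zero {n : ℕ} [NeZero n] {A : Fin n → Matrix (Fin 2) (Fin 2) ℂ}
    {c : Fin n → ℂ} (h : ∀ j, HasColumnRatio (A j) (c j)) (hc : ∏ j, c j = -I) :
    tensor A *ᵥ GHZ' n = 0 := by
  rw [GHZ'_eq_smul_sub_single, mulVec_smul, mulVec_sub, mulVec_smul, mulVec_single_one, mulVec_single_one,
    tensor_col_const_one h, hc, smul_smul, mul_neg, I_mul_I, neg_neg, one_smul, sub_self, smul_zero]

theorem tensor3_mulVec_GHZ'_eq_zero {A B C : Matrix (Fin 2) (Fin 2) ℂ} {a b c : ℂ}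
    (hA : HasColumnRatio A a) (hB : HasColumnRatio B b) (hC : HasColumnRatio C c)
    (habc : a * b * c = -I) : tensor ![A, B, C] *ᵥ GHZ' 3 = 0 :=
  tensor_mulVec_GHZ'_eq_zero (c := ![a, b, c])
    (Fin.forall_fin_succ.2 ⟨hA, Fin.forall_fin_two.2 ⟨hB, hC⟩⟩)
    (by simpa [Fin.prod_univ_three] using habc)

theorem proj3_annihilates_ghz' :
    ∀ k : Fin 16, (Proj3 k).mulVec (GHZ' 3) = 0 := by
  intro k
  fin_cases k <;> apply tensor3_mulVec_GHZ'_eq_zero <;>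
    first
    | exact hasColumnRatio_Ppx | exact hasColumnRatio_Pmx
    | exact hasColumnRatio_Ppy | exact hasColumnRatio_Pmy
    | grind [I_mul_I]
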